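/- arXiv:2310.18934 — 6 statements merged into one kernel-verified Lean document; each statement's English description precedes it below -/
import Mathlib

section
/- Let n be a positive integer and let B₁, …, Bₙ be 2×2 complex matrices that pairwise commute (Bᵢ·Bⱼ = Bⱼ·Bᵢ for all i, j). Then there exist complex numbers λ₁, …, λₙ such that for every x = (x₁, …, xₙ) ∈ ℂⁿ one has (Tr(∑ᵢ xᵢBᵢ))² − 4·det(∑ᵢ xᵢBᵢ) = (∑ᵢ xᵢλᵢ)². -/
/-
Writing `p = M 0 0 - M 1 1`, the discriminant `(tr M)² - 4 det M` of a `2 × 2` matrix is the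
quadratic form `p² + 4 M 0 1 M 1 0`, whose polarization `discrBilin` is bilinear in `M`. Hence the
discriminant of `∑ xᵢ Bᵢ` is `∑ xᵢ xⱼ Qᵢⱼ` with Gram matrix `Qᵢⱼ = discrBilin Bᵢ Bⱼ`. The entrywise
form of the commutation relations makes the minors `Qᵢⱼ Qₖₖ - Qᵢₖ Qⱼₖ` vanish, and over `ℂ` a
matrix with this property is `λ λᵀ`; then `∑ xᵢ xⱼ λᵢ λⱼ = (∑ xᵢ λᵢ)²`.
-/

open Matrix

namespace Matrix

variable {R : Type*} [CommRing R]

theorem commute_fin_two_iff {M N : Matrix (Fin 2) (Fin 2) R} :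
    Commute M N ↔ M 0 1 * N 1 0 = N 0 1 * M 1 0 ∧
      (M 0 0 - M 1 1) * N 0 1 = (N 0 0 - N 1 1) * M 0 1 ∧
      (M 0 0 - M 1 1) * N 1 0 = (N 0 0 - N 1 1) * M 1 0 := by
  rw [Commute, SemiconjBy, ← Matrix.ext_iff, Fin.forall_fin_two, Fin.forall_fin_two,
    Fin.forall_fin_two]
  simp only [mul_apply, Fin.sum_univ_two]
  constructor
  · rintro ⟨⟨h00, h01⟩, h10, -⟩
    exact ⟨by linear_combination h00, by linear_combination h01, by linear_combination -h10⟩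
  · rintro ⟨h, h01, h10⟩
    exact ⟨⟨by linear_combination h, by linear_combination h01⟩,
      by linear_combination -h10, by linear_combination -h⟩

def discrBilin : LinearMap.BilinForm R (Matrix (Fin 2) (Fin 2) R) :=
  LinearMap.mk₂ R
    (fun M N => (M 0 0 - M 1 1) * (N 0 0 - N 1 1) + 2 * (M 0 1 * N 1 0 + M 1 0 * N 0 1))
    (by intros; simp only [add_apply]; ring) (by intros; simp only [smul_apply, smul_eq_mul]; ring)
    (by intros; simp only [add_apply]; ring) (by intros; simp only [smul_apply, smul_eq_mul]; ring)

theorem discrBilin_apply (M N : Matrix (Fin 2) (Fin 2) R) :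
    discrBilin M N =
      (M 0 0 - M 1 1) * (N 0 0 - N 1 1) + 2 * (M 0 1 * N 1 0 + M 1 0 * N 0 1) :=
  rfl

theorem trace_sq_sub_four_mul_det (M : Matrix (Fin 2) (Fin 2) R) :
    M.trace ^ 2 - 4 * M.det = discrBilin M M := by
  rw [trace_fin_two, det_fin_two, discrBilin_apply]
  ring

theorem discrBilin_sum_smul {ι : Type*} [Fintype ι] (x : ι → R)
    (B : ι → Matrix (Fin 2) (Fin 2) R) :
    discrBilin (∑ i, x i • B i) (∑ i, x i • B i) =
      ∑ i, ∑ j, x i * x j * discrBilin (B i) (B j) := by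
  simp only [map_sum, map_smul, LinearMap.sum_apply, LinearMap.smul_apply, smul_eq_mul,
    Finset.mul_sum]
  rw [Finset.sum_comm]
  simp only [mul_left_comm, mul_assoc]

theorem discrBilin_mul_discrBilin_of_commute {M N L : Matrix (Fin 2) (Fin 2) R}
    (hMN : Commute M N) (hML : Commute M L) (hNL : Commute N L) :
    discrBilin M N * discrBilin L L = discrBilin M L * discrBilin N L := by
  obtain ⟨hMN₁, hMN₂, hMN₃⟩ := commute_fin_two_iff.mp hMN
  obtain ⟨hML₁, hML₂, hML₃⟩ := commute_fin_two_iff.mp hML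
  obtain ⟨hNL₁, hNL₂, hNL₃⟩ := commute_fin_two_iff.mp hNL
  simp only [discrBilin_apply]
  grind

theorem exists_eq_vecMulVec_self_of_mul_eq_mul {ι K : Type*} [Field K] [IsAlgClosed K]
    (Q : Matrix ι ι K) (hQ : ∀ i j k, Q i j * Q k k = Q i k * Q j k) :
    ∃ v : ι → K, Q = vecMulVec v v := by
  by_cases hdiag : ∀ k, Q k k = 0
  · refine ⟨0, ext fun i j => ?_⟩
    have hsq : Q i j * Q i j = 0 := by rw [← hQ i i j, hdiag, zero_mul]
    simpa [vecMulVec_apply] using hsq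
  · obtain ⟨k, hk⟩ := not_forall.mp hdiag
    obtain ⟨μ, hμ⟩ := IsAlgClosed.exists_eq_mul_self (Q k k)
    refine ⟨fun i => Q i k / μ, ext fun i j => ?_⟩
    rw [vecMulVec_apply, div_mul_div_comm, ← hμ, ← hQ, mul_div_cancel_right₀ _ hk]

end Matrix

theorem stmt_0_general (n : ℕ) (B : Fin n → Matrix (Fin 2) (Fin 2) ℂ)
    (hcomm : ∀ i j, B i * B j = B j * B i) :
    ∃ lam : Fin n → ℂ, ∀ x : Fin n → ℂ,
      (Matrix.trace (∑ i, x i • B i)) ^ 2 - 4 * (∑ i, x i • B i).det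
        = (∑ i, x i * lam i) ^ 2 := by
  obtain ⟨lam, hlam⟩ := exists_eq_vecMulVec_self_of_mul_eq_mul
    (of fun i j => discrBilin (B i) (B j))
    fun i j k => discrBilin_mul_discrBilin_of_commute (hcomm i j) (hcomm i k) (hcomm j k)
  refine ⟨lam, fun x => ?_⟩
  have hgram : ∀ i j, discrBilin (B i) (B j) = lam i * lam j := fun i j =>
    congrFun₂ hlam i j
  rw [trace_sq_sub_four_mul_det, discrBilin_sum_smul, sq, Finset.sum_mul_sum]
  simp only [hgram]
  exact Finset.sum_congr rfl fun i _ => Finset.sum_congr rfl fun j _ => by ring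

/-- Pointwise linear-algebra form of the factorization of the Hitchin morphism through
the spectral base: for pairwise commuting 2×2 complex matrices `B i`, the quadratic form
`(Tr φ)² - 4 det φ` of `φ = ∑ xᵢ Bᵢ` is the square of a linear form. -/
theorem stmt_0 (n : ℕ) (hn : 0 < n) (B : Fin n → Matrix (Fin 2) (Fin 2) ℂ)
    (hcomm : ∀ i j, B i * B j = B j * B i) :
    ∃ lam : Fin n → ℂ, ∀ x : Fin n → ℂ,
      (Matrix.trace (∑ i, x i • B i)) ^ 2 - 4 * (∑ i, x i • B i).det
        = (∑ i, x i * lam i) ^ 2 :=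
  stmt_0_general n B hcomm
end

section
/- Let n be a positive integer and let B₁, …, Bₙ be 2×2 complex matrices that pairwise commute and each have trace zero. Then there exist complex numbers λ₁, …, λₙ such that for every x = (x₁, …, xₙ) ∈ ℂⁿ one has det(∑ᵢ xᵢBᵢ) = −(∑ᵢ xᵢλᵢ)². -/
open Matrix BigOperators

/-!
Trace-free commuting 2×2 matrices multiply to scalars: `A * C + C * A = tr(A C)` for trace-free
`A, C`, so `B i * B j = c i j` for scalars `c i j`. Regrouping `(B i B k)(B j B k)` as
`(B i B j)(B k B k)` shows that the minors `c i k c j k - c i j c k k` vanish, so over `ℂ`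
`c` factors as `c i j = λ i λ j`. Then `M = ∑ xᵢ Bᵢ` satisfies `M² = (∑ xᵢ λᵢ)²`, while
Cayley–Hamilton for the trace-free `M` gives `M² = -det M`.
-/

lemma exists_eq_mul_of_mul_eq_mul {ι K : Type*} [Field K] [IsAlgClosed K] {c : ι → ι → K}
    (hc : ∀ i j k, c i k * c j k = c i j * c k k) : ∃ lam : ι → K, ∀ i j, c i j = lam i * lam j := by
  by_cases hdiag : ∀ k, c k k = 0
  · refine ⟨0, fun i j => ?_⟩
    have h := hc i i j
    rw [hdiag i, hdiag j, mul_zero, mul_self_eq_zero] at h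
    simp [h]
  · obtain ⟨k, hk⟩ := not_forall.mp hdiag
    obtain ⟨μ, hμ⟩ := IsAlgClosed.exists_pow_nat_eq (c k k) two_pos
    have hμ0 : μ ≠ 0 := by
      rintro rfl
      exact hk (by simpa using hμ.symm)
    refine ⟨fun i => c i k / μ, fun i j => ?_⟩
    field_simp
    linear_combination c i j * hμ - hc i j k

namespace Matrix

variable {R : Type*} [CommRing R]

lemma mul_self_eq_scalar_neg_det {A : Matrix (Fin 2) (Fin 2) R} (hA : trace A = 0) :
    A * A = scalar (Fin 2) (-A.det) := by
  have hA : A 1 1 = -A 0 0 := eq_neg_of_add_eq_zero_right (trace_fin_two A ▸ hA)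
  ext i j
  fin_cases i <;> fin_cases j <;> simp [mul_apply, det_fin_two, hA] <;> ring

lemma mul_add_mul_eq_scalar_trace {A C : Matrix (Fin 2) (Fin 2) R} (hA : trace A = 0)
    (hC : trace C = 0) : A * C + C * A = scalar (Fin 2) (trace (A * C)) := by
  have hA : A 1 1 = -A 0 0 := eq_neg_of_add_eq_zero_right (trace_fin_two A ▸ hA)
  have hC : C 1 1 = -C 0 0 := eq_neg_of_add_eq_zero_right (trace_fin_two C ▸ hC)
  ext i j
  fin_cases i <;> fin_cases j <;> simp [mul_apply, trace_fin_two, hA, hC] <;> ring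

lemma _root_.Commute.mul_eq_scalar_of_trace_eq_zero {K : Type*} [Field K] [NeZero (2 : K)]
    {A C : Matrix (Fin 2) (Fin 2) K} (h : Commute A C) (hA : trace A = 0) (hC : trace C = 0) :
    A * C = scalar (Fin 2) (trace (A * C) / 2) := by
  have h2 : (2 : K) • (A * C) = scalar (Fin 2) (trace (A * C)) := by
    rw [two_smul, ← mul_add_mul_eq_scalar_trace hA hC, h.eq]
  generalize trace (A * C) = t at h2 ⊢
  rw [(eq_inv_smul_iff₀ two_ne_zero).mpr h2, scalar_apply, scalar_apply, ← diagonal_smul]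
  simp only [Pi.smul_def, smul_eq_mul, inv_mul_eq_div]

lemma sum_smul_mul_self {ι : Type*} [Fintype ι] {B : ι → Matrix (Fin 2) (Fin 2) R} {lam : ι → R}
    (hB : ∀ i j, B i * B j = scalar (Fin 2) (lam i * lam j)) (x : ι → R) :
    (∑ i, x i • B i) * (∑ i, x i • B i) = scalar (Fin 2) ((∑ i, x i * lam i) ^ 2) := by
  simp_rw [sq, Finset.sum_mul_sum, map_sum, smul_mul_smul_comm, hB]
  refine Finset.sum_congr rfl fun i _ => Finset.sum_congr rfl fun j _ => ?_
  rw [scalar_apply, scalar_apply, ← diagonal_smul]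
  congr 1
  ext
  simp only [Pi.smul_apply, smul_eq_mul]
  ring

lemma det_sum_smul_eq_neg_sq {ι : Type*} [Fintype ι]
    {B : ι → Matrix (Fin 2) (Fin 2) R} {lam : ι → R}
    (hB : ∀ i j, B i * B j = scalar (Fin 2) (lam i * lam j)) (htrace : ∀ i, trace (B i) = 0)
    (x : ι → R) : (∑ i, x i • B i).det = -(∑ i, x i * lam i) ^ 2 := by
  have htr : trace (∑ i, x i • B i) = 0 := by simp [trace_sum, htrace]
  have h := (mul_self_eq_scalar_neg_det htr).symm.trans (sum_smul_mul_self hB x)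
  rw [scalar_inj] at h
  exact neg_eq_iff_eq_neg.mp h

lemma exists_mul_eq_scalar_mul_of_commute {ι K : Type*} [Field K] [IsAlgClosed K] [NeZero (2 : K)]
    {B : ι → Matrix (Fin 2) (Fin 2) K} (hcomm : ∀ i j, Commute (B i) (B j))
    (htrace : ∀ i, trace (B i) = 0) :
    ∃ lam : ι → K, ∀ i j, B i * B j = scalar (Fin 2) (lam i * lam j) := by
  set c : ι → ι → K := fun i j => trace (B i * B j) / 2
  have hc : ∀ i j, B i * B j = scalar (Fin 2) (c i j) := fun i j =>
    (hcomm i j).mul_eq_scalar_of_trace_eq_zero (htrace i) (htrace j)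
  have hrank : ∀ i j k, c i k * c j k = c i j * c k k := by
    intro i j k
    rw [← scalar_inj (n := Fin 2), map_mul, map_mul, ← hc, ← hc, ← hc, ← hc, mul_assoc,
      ← mul_assoc (B k), (hcomm k j).eq, mul_assoc, mul_assoc]
  obtain ⟨lam, hlam⟩ := exists_eq_mul_of_mul_eq_mul hrank
  exact ⟨lam, fun i j => hlam i j ▸ hc i j⟩

end Matrix

theorem stmt_1_general (n : ℕ) (B : Fin n → Matrix (Fin 2) (Fin 2) ℂ)
    (hcomm : ∀ i j, B i * B j = B j * B i)
    (htrace : ∀ i, Matrix.trace (B i) = 0) :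
    ∃ lam : Fin n → ℂ, ∀ x : Fin n → ℂ,
      (∑ i, x i • B i).det = -(∑ i, x i * lam i) ^ 2 := by
  obtain ⟨lam, hlam⟩ := exists_mul_eq_scalar_mul_of_commute hcomm htrace
  exact ⟨lam, det_sum_smul_eq_neg_sq hlam htrace⟩

/-- For pairwise commuting trace-zero 2×2 complex matrices `B i`, the determinant of
`∑ xᵢ Bᵢ` is minus the square of a linear form in `x`. -/
theorem stmt_1 (n : ℕ) (hn : 0 < n) (B : Fin n → Matrix (Fin 2) (Fin 2) ℂ)
    (hcomm : ∀ i j, B i * B j = B j * B i)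
    (htrace : ∀ i, Matrix.trace (B i) = 0) :
    ∃ lam : Fin n → ℂ, ∀ x : Fin n → ℂ,
      (∑ i, x i • B i).det = -(∑ i, x i * lam i) ^ 2 :=
  stmt_1_general n B hcomm htrace
end

section
/- Let B₁, …, Bₙ be 2×2 complex matrices that pairwise commute and each have trace zero, and assume that at least one Bⱼ is not nilpotent. Then there exist a single 2×2 complex matrix C with Tr C = 0 and C·C = I (the identity matrix), and complex numbers λ₁, …, λₙ, such that Bᵢ = λᵢ·C for every i. -/
open Matrix

/-!
For trace-free `2 × 2` matrices the anticommutator is scalar: `XY + YX = tr(XY) • 1`. Hence two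
commuting trace-free matrices multiply to a scalar, `XY = (tr(XY)/2) • 1`. For the non-nilpotent
`M = Bⱼ` this gives `M² = d • 1` with `d ≠ 0`, and then `Bᵢ M = cᵢ • 1` forces `Bᵢ = (cᵢ/d) • M`.
Rescaling `M` by a square root of `d` yields the involution `C`.
-/
namespace Matrix

variable {K : Type*}

theorem fin_two_mul_add_mul_of_trace_eq_zero [CommRing K] {X Y : Matrix (Fin 2) (Fin 2) K}
    (hX : X.trace = 0) (hY : Y.trace = 0) : X * Y + Y * X = (X * Y).trace • 1 := by
  rw [trace_fin_two, add_eq_zero_iff_eq_neg'] at hX hY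
  ext i j
  fin_cases i <;> fin_cases j <;> simp [mul_apply, trace_fin_two, hX, hY] <;> ring

theorem fin_two_mul_eq_smul_one_of_commute [Field K] [NeZero (2 : K)]
    {X Y : Matrix (Fin 2) (Fin 2) K} (hX : X.trace = 0) (hY : Y.trace = 0)
    (hXY : Commute X Y) : X * Y = ((X * Y).trace / 2) • 1 := by
  have h := fin_two_mul_add_mul_of_trace_eq_zero hX hY
  rw [← hXY.eq, ← two_smul K] at h
  rw [div_eq_inv_mul, mul_smul, ← h, smul_smul, inv_mul_cancel₀ two_ne_zero, one_smul]

theorem fin_two_exists_mul_self_eq_smul_one [Field K] [NeZero (2 : K)]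
    {M : Matrix (Fin 2) (Fin 2) K} (hM : M.trace = 0) (hM' : ¬IsNilpotent M) :
    ∃ d : K, d ≠ 0 ∧ M * M = d • 1 := by
  have hMM := fin_two_mul_eq_smul_one_of_commute hM hM (Commute.refl M)
  refine ⟨_, fun hd ↦ hM' ⟨2, ?_⟩, hMM⟩
  rw [sq, hMM, hd, zero_smul]

theorem fin_two_exists_eq_smul_of_commute [Field K] [NeZero (2 : K)]
    {A M : Matrix (Fin 2) (Fin 2) K} (hA : A.trace = 0) (hM : M.trace = 0)
    (hM' : ¬IsNilpotent M) (hAM : Commute A M) : ∃ l : K, A = l • M := by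
  have hAM' := fin_two_mul_eq_smul_one_of_commute hA hM hAM
  obtain ⟨d, hd, hMM⟩ := fin_two_exists_mul_self_eq_smul_one hM hM'
  set c := (A * M).trace / 2
  refine ⟨d⁻¹ * c, ?_⟩
  calc A = d⁻¹ • (A * (M * M)) := by
        rw [hMM, mul_smul_comm, mul_one, smul_smul, inv_mul_cancel₀ hd, one_smul]
    _ = (d⁻¹ * c) • M := by rw [← mul_assoc, hAM', smul_mul_assoc, one_mul, smul_smul]

end Matrix

/-- Pairwise commuting trace-free 2×2 complex matrices, one of which is not nilpotent,
are all scalar multiples `Bᵢ = λᵢ • C` of a single trace-free involution `C`. -/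
theorem stmt_3 (n : ℕ) (B : Fin n → Matrix (Fin 2) (Fin 2) ℂ)
    (hcomm : ∀ i j, B i * B j = B j * B i)
    (htrace : ∀ i, Matrix.trace (B i) = 0)
    (hnn : ∃ j, ¬ IsNilpotent (B j)) :
    ∃ C : Matrix (Fin 2) (Fin 2) ℂ, Matrix.trace C = 0 ∧ C * C = 1 ∧
      ∃ lam : Fin n → ℂ, ∀ i, B i = lam i • C := by
  obtain ⟨j, hj⟩ := hnn
  obtain ⟨d, hd, hMM⟩ := fin_two_exists_mul_self_eq_smul_one (htrace j) hj
  obtain ⟨μ, hμ⟩ := IsAlgClosed.exists_pow_nat_eq d two_pos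
  have hμ0 : μ ≠ 0 := by rintro rfl; exact hd (by simp [← hμ])
  choose l hl using fun i ↦ fin_two_exists_eq_smul_of_commute (htrace i) (htrace j) hj (hcomm i j)
  refine ⟨μ⁻¹ • B j, by rw [trace_smul, htrace j, smul_zero], ?_, fun i ↦ l i * μ, fun i ↦ ?_⟩
  · rw [smul_mul_smul_comm, hMM, smul_smul, ← hμ, ← sq, ← mul_pow, inv_mul_cancel₀ hμ0,
      one_pow, one_smul]
  · rw [hl i, smul_smul, mul_assoc, mul_inv_cancel₀ hμ0, mul_one]
end

section
/- Let V be a finite-dimensional complex vector space and let W be a ℂ-linear subspace of the space of quadratic forms on V such that every element q of W is the square of a linear functional, i.e. for each q ∈ W there exists a linear map ℓ : V → ℂ with q(v) = (ℓ(v))² for all v ∈ V. Then W has complex dimension at most 1. -/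
/-!
If `q = l²` is a nonzero element of `W` and `q' = l'²` is any other one, then `q + q' = m²` for
some linear form `m`. A vector killed by `l` but not by `l'`, together with one killed by `l'` but
not by `l`, would give `m(v + w)² = m(v)² + m(w)²` with `m(v), m(w) ≠ 0`, impossible as `2 ≠ 0`. Hence one
kernel contains the other, `l'` is a multiple `c • l`, and `q' = c² • q`.
-/

section

open LinearMap

variable {K V : Type*} [Field K] [AddCommGroup V] [Module K V]

theorem LinearMap.exists_eq_smul_of_ker_le {l l' : V →ₗ[K] K} (h : ker l ≤ ker l') :
    ∃ c : K, l' = c • l := by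
  have hspan : l' ∈ Submodule.span K (Set.range fun _ : Unit => l) :=
    mem_span_of_iInf_ker_le_ker (by simpa using h)
  obtain ⟨c, hc⟩ := Submodule.mem_span_singleton.mp (by simpa using hspan)
  exact ⟨c, hc.symm⟩

theorem LinearMap.ker_le_ker_or_ker_le_ker_of_sq_add_sq_eq_sq [NeZero (2 : K)]
    {l l' m : V →ₗ[K] K} (h : ∀ v, l v ^ 2 + l' v ^ 2 = m v ^ 2) :
    ker l ≤ ker l' ∨ ker l' ≤ ker l := by
  by_contra! ⟨hne, hne'⟩
  obtain ⟨w, hlw, hl'w⟩ := SetLike.not_le_iff_exists.mp hne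
  obtain ⟨v, hl'v, hlv⟩ := SetLike.not_le_iff_exists.mp hne'
  rw [mem_ker] at hlw hl'w hl'v hlv
  have hv : m v ^ 2 = l v ^ 2 := by simpa [hl'v] using (h v).symm
  have hw : m w ^ 2 = l' w ^ 2 := by simpa [hlw] using (h w).symm
  have hvw : m (v + w) ^ 2 = l v ^ 2 + l' w ^ 2 := by simpa [hlw, hl'v] using (h (v + w)).symm
  have hcross : 2 * m v * m w = 0 := by
    rw [map_add] at hvw
    linear_combination hvw - hv - hw
  have hmv : m v ≠ 0 := fun h0 => hlv (pow_eq_zero_iff two_ne_zero |>.mp (by rw [← hv, h0]; ring))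
  have hmw : m w ≠ 0 := fun h0 => hl'w (pow_eq_zero_iff two_ne_zero |>.mp (by rw [← hw, h0]; ring))
  exact mul_ne_zero (mul_ne_zero two_ne_zero hmv) hmw hcross

theorem LinearMap.exists_eq_smul_of_sq_add_sq_eq_sq [NeZero (2 : K)] {l l' m : V →ₗ[K] K}
    (hl : l ≠ 0) (h : ∀ v, l v ^ 2 + l' v ^ 2 = m v ^ 2) : ∃ c : K, l' = c • l := by
  rcases ker_le_ker_or_ker_le_ker_of_sq_add_sq_eq_sq h with hle | hle
  · exact exists_eq_smul_of_ker_le hle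
  · obtain ⟨c, rfl⟩ := exists_eq_smul_of_ker_le hle
    have hc : c ≠ 0 := by rintro rfl; exact hl (zero_smul K l')
    exact ⟨c⁻¹, by rw [smul_smul, inv_mul_cancel₀ hc, one_smul]⟩

end

theorem stmt_4_general (V : Type*) [AddCommGroup V] [Module ℂ V]
    (W : Submodule ℂ (QuadraticForm ℂ V))
    (h : ∀ q ∈ W, ∃ l : V →ₗ[ℂ] ℂ, ∀ v : V, q v = (l v) ^ 2) :
    Module.finrank ℂ W ≤ 1 := by
  rcases eq_or_ne W ⊥ with rfl | hW
  · simp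
  obtain ⟨q, hqW, hq0⟩ := Submodule.exists_mem_ne_zero_of_ne_bot hW
  obtain ⟨l, hl⟩ := h q hqW
  have hl0 : l ≠ 0 := by
    rintro rfl
    exact hq0 (QuadraticMap.ext fun v => by simp [hl])
  refine finrank_le_one ⟨q, hqW⟩ fun ⟨q', hq'W⟩ => ?_
  obtain ⟨l', hl'⟩ := h q' hq'W
  obtain ⟨m, hm⟩ := h (q + q') (W.add_mem hqW hq'W)
  have hsum : ∀ v, l v ^ 2 + l' v ^ 2 = m v ^ 2 := fun v => by
    rw [← hl, ← hl', ← hm, _root_.add_apply]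
  obtain ⟨c, rfl⟩ := LinearMap.exists_eq_smul_of_sq_add_sq_eq_sq hl0 hsum
  refine ⟨c ^ 2, Subtype.ext (QuadraticMap.ext fun v => ?_)⟩
  simp only [SetLike.mk_smul_mk, _root_.smul_apply, hl, hl', LinearMap.smul_apply, smul_eq_mul]
  ring

/-- A linear subspace of the space of quadratic forms on a finite-dimensional complex
vector space consisting entirely of squares of linear functionals (i.e. contained in the
Veronese cone) has dimension at most one. -/
theorem stmt_4 (V : Type*) [AddCommGroup V] [Module ℂ V] [FiniteDimensional ℂ V]
    (W : Submodule ℂ (QuadraticForm ℂ V))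
    (h : ∀ q ∈ W, ∃ l : V →ₗ[ℂ] ℂ, ∀ v : V, q v = (l v) ^ 2) :
    Module.finrank ℂ W ≤ 1 :=
  stmt_4_general V W h
end

section
/- Let K be a field, V a finite-dimensional K-vector space of dimension n, φ an endomorphism of V, g an invertible endomorphism of V, and t ∈ K a scalar such that g ∘ φ ∘ g⁻¹ = t • φ. If t^k ≠ 1 for every integer k with 1 ≤ k ≤ n, then φ is nilpotent. -/
/-!
Conjugation invariance of the characteristic polynomial gives `χ(t • φ) = χ(φ)`, while
`χ(t • φ)` is `χ(φ)` with its roots scaled by `t`, i.e. its `i`-th coefficient is multiplied by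
`t ^ (n - i)`. Since no `t ^ k` with `1 ≤ k ≤ n` equals `1`, every coefficient below the leading
one vanishes, so `χ(φ) = X ^ n` and `φ` is nilpotent by Cayley–Hamilton.
-/

open Polynomial

namespace Polynomial

lemma scaleRoots_comp_C_mul_X {R : Type*} [CommRing R] (p : R[X]) (t : R) :
    (p.scaleRoots t).comp (C t * X) = C (t ^ p.natDegree) * p := by
  ext i
  rw [comp_C_mul_X_coeff, coeff_scaleRoots, coeff_C_mul]
  rcases le_or_gt i p.natDegree with hi | hi
  · rw [mul_assoc, ← pow_add, Nat.sub_add_cancel hi, mul_comm]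
  · simp [coeff_eq_zero_of_natDegree_lt hi]

lemma Monic.eq_X_pow_of_scaleRoots_eq {R : Type*} [CommRing R] [NoZeroDivisors R] {p : R[X]}
    (hp : p.Monic) {t : R} (h : p.scaleRoots t = p)
    (ht : ∀ k, 1 ≤ k → k ≤ p.natDegree → t ^ k ≠ 1) :
    p = X ^ p.natDegree := by
  ext i
  rw [coeff_X_pow]
  rcases lt_trichotomy i p.natDegree with hi | rfl | hi
  · have hfix : p.coeff i * t ^ (p.natDegree - i) = p.coeff i := by
      rw [← coeff_scaleRoots, h]
    have hne : t ^ (p.natDegree - i) - 1 ≠ 0 :=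
      sub_ne_zero.mpr (ht _ (by omega) (by omega))
    rw [if_neg hi.ne]
    refine (mul_eq_zero.mp ?_).resolve_right hne
    rw [mul_sub, mul_one, hfix, sub_self]
  · simpa using hp.coeff_natDegree
  · rw [if_neg hi.ne', coeff_eq_zero_of_natDegree_lt hi]

end Polynomial

namespace Matrix

variable {R n : Type*} [CommRing R] [Fintype n] [DecidableEq n]

lemma charpoly_smul_comp_C_mul_X (M : Matrix n n R) (t : R) :
    (t • M).charpoly.comp (C t * X) = C (t ^ Fintype.card n) * M.charpoly := by
  have hcharmatrix : (t • M).charmatrix.map (compRingHom (C t * X)) = C t • M.charmatrix := by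
    ext i j
    by_cases hij : i = j
    · subst hij
      simp [mul_sub]
    · simp [hij]
  rw [charpoly, ← coe_compRingHom_apply, RingHom.map_det, RingHom.mapMatrix_apply, hcharmatrix,
    det_smul, C_pow, charpoly]

lemma charpoly_smul [IsDomain R] (M : Matrix n n R) (t : R) :
    (t • M).charpoly = M.charpoly.scaleRoots t := by
  rcases eq_or_ne t 0 with rfl | ht
  · simp [charpoly_zero, M.charpoly_monic.leadingCoeff, charpoly_natDegree_eq_dim]
  · rw [← sub_eq_zero, ← comp_C_mul_X_eq_zero_iff (mem_nonZeroDivisors_of_ne_zero ht), sub_comp,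
      charpoly_smul_comp_C_mul_X, scaleRoots_comp_C_mul_X, charpoly_natDegree_eq_dim, sub_self]

end Matrix

lemma LinearMap.charpoly_smul {R M : Type*} [CommRing R] [IsDomain R] [AddCommGroup M] [Module R M]
    [Module.Free R M] [Module.Finite R M] (φ : Module.End R M) (t : R) :
    (t • φ).charpoly = φ.charpoly.scaleRoots t := by
  rw [charpoly_def, charpoly_def, map_smul, Matrix.charpoly_smul]

/-- If an invertible endomorphism `g` conjugates `φ` to `t • φ` and `t^k ≠ 1` for all
`1 ≤ k ≤ n = dim V`, then `φ` is nilpotent. -/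
theorem stmt_6 {K : Type*} [Field K] {V : Type*} [AddCommGroup V] [Module K V]
    [FiniteDimensional K V] (n : ℕ) (hdim : Module.finrank K V = n)
    (φ : Module.End K V) (g : V ≃ₗ[K] V) (t : K)
    (hconj : (g : V →ₗ[K] V) ∘ₗ φ ∘ₗ (g.symm : V →ₗ[K] V) = t • φ)
    (ht : ∀ k : ℕ, 1 ≤ k → k ≤ n → t ^ k ≠ 1) :
    IsNilpotent φ := by
  have hfix : φ.charpoly.scaleRoots t = φ.charpoly := by
    rw [← LinearMap.charpoly_smul, ← hconj]
    exact g.charpoly_conj φ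
  rw [LinearMap.isNilpotent_iff_charpoly, ← φ.charpoly_natDegree]
  exact φ.charpoly_monic.eq_X_pow_of_scaleRoots_eq hfix (by rwa [φ.charpoly_natDegree, hdim])
end

section
/- Let V be a 2-dimensional complex vector space, t ∈ ℂ with t ≠ 0, t ≠ 1 and t ≠ −1, let φ be a nonzero endomorphism of V, and let g be an invertible endomorphism of V with g ∘ φ = t • (φ ∘ g). Then there exists a basis (v₁, v₂) of V consisting of eigenvectors of g for two distinct nonzero eigenvalues μ and tμ (g·v₁ = μ·v₁ and g·v₂ = tμ·v₂), such that φ(v₂) = 0 and φ(v₁) is a nonzero multiple of v₂. -/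
/-!
From `g φ = t φ g` one gets `(g - tμ)^k φ = t^k φ (g - μ)^k`, so `φ` carries the generalized
`μ`-eigenspace of `g` into the generalized `tμ`-eigenspace. These spaces span `V` and `φ ≠ 0`,
so some `μ` and `tμ` are both eigenvalues of `g`; they differ since `μ ≠ 0` (`g` is invertible)
and `t ≠ 1`. In dimension two `t²μ` is then not an eigenvalue (`t ≠ ±1`), so `φ` kills the
`tμ`-eigenline, hence cannot also kill the `μ`-eigenline, and maps it onto the `tμ`-eigenline.
-/

open Module Module.End Set

section TwistedCommute

variable {R A : Type*} [CommRing R] [Ring A] [Algebra R A]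

theorem sub_smul_one_pow_mul_of_mul_eq_smul_mul {g φ : A} {t : R} (h : g * φ = t • (φ * g))
    (μ : R) (k : ℕ) :
    (g - (t * μ) • (1 : A)) ^ k * φ = t ^ k • (φ * (g - μ • (1 : A)) ^ k) := by
  have base : (g - (t * μ) • (1 : A)) * φ = t • (φ * (g - μ • (1 : A))) := by
    rw [sub_mul, h, smul_one_mul, mul_sub, mul_smul_one, smul_sub, mul_smul]
  induction k with
  | zero => simp
  | succ k ih =>
    rw [pow_succ, mul_assoc, base, mul_smul_comm, ← mul_assoc, ih, smul_mul_assoc, mul_assoc,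
      ← pow_succ, smul_smul, ← pow_succ']

end TwistedCommute

namespace Module.End

variable {K V : Type*} [Field K] [AddCommGroup V] [Module K V]

theorem mapsTo_genEigenspace_of_mul_eq_smul_mul {g φ : End K V} {t : K}
    (h : g * φ = t • (φ * g)) (μ : K) (k : ℕ∞) :
    MapsTo φ (g.genEigenspace μ k) (g.genEigenspace (t * μ) k) := by
  intro x hx
  obtain ⟨l, hlk, hxl⟩ := mem_genEigenspace.mp hx
  refine mem_genEigenspace.mpr ⟨l, hlk, ?_⟩
  rw [LinearMap.mem_ker] at hxl ⊢
  rw [← Module.End.mul_apply, sub_smul_one_pow_mul_of_mul_eq_smul_mul h, LinearMap.smul_apply,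
    Module.End.mul_apply, hxl, map_zero, smul_zero]

theorem exists_hasEigenvalue_and_hasEigenvalue_mul [IsAlgClosed K] [FiniteDimensional K V]
    {g φ : End K V} {t : K} (hφ : φ ≠ 0) (h : g * φ = t • (φ * g)) :
    ∃ μ, g.HasEigenvalue μ ∧ g.HasEigenvalue (t * μ) := by
  by_contra! hnone
  refine hφ (LinearMap.ker_eq_top.mp (top_le_iff.mp ?_))
  rw [← iSup_maxGenEigenspace_eq_top g, iSup_le_iff]
  intro μ x hx
  by_contra hφx
  have hx0 : x ≠ 0 := fun hx0 => hφx (by simp [hx0])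
  have hμ : g.HasUnifEigenvalue μ ⊤ := (Submodule.ne_bot_iff _).mpr ⟨x, hx, hx0⟩
  have htμ : g.HasUnifEigenvalue (t * μ) ⊤ :=
    (Submodule.ne_bot_iff _).mpr ⟨φ x, mapsTo_genEigenspace_of_mul_eq_smul_mul h μ ⊤ hx, hφx⟩
  exact hnone μ (hμ.lt zero_lt_one) (htμ.lt zero_lt_one)

variable {g : End K V}

theorem eigenspace_eq_bot_of_finrank_eq_two (hV : finrank K V = 2) {μ₁ μ₂ ν : K}
    (h₁ : g.HasEigenvalue μ₁) (h₂ : g.HasEigenvalue μ₂) (h₁₂ : μ₁ ≠ μ₂) (hν₁ : ν ≠ μ₁)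
    (hν₂ : ν ≠ μ₂) : g.eigenspace ν = ⊥ := by
  by_contra hν
  obtain ⟨v₁, hv₁⟩ := h₁.exists_hasEigenvector
  obtain ⟨v₂, hv₂⟩ := h₂.exists_hasEigenvector
  obtain ⟨w, hw⟩ := HasEigenvalue.exists_hasEigenvector (f := g) hν
  have hinj : Function.Injective ![μ₁, μ₂, ν] := by
    intro i j hij
    fin_cases i <;> fin_cases j <;> simp_all [eq_comm]
  have hli := g.eigenvectors_linearIndependent' _ hinj ![v₁, v₂, w] (by
    intro i
    fin_cases i <;> assumption)
  have : FiniteDimensional K V := .of_finrank_pos (by omega)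
  have := hli.fintype_card_le_finrank
  simp [hV] at this

theorem exists_basis_of_hasEigenvector_of_ne (hV : finrank K V = 2) {μ ν : K} {v w : V}
    (hv : g.HasEigenvector μ v) (hw : g.HasEigenvector ν w) (hμν : μ ≠ ν) :
    ∃ b : Basis (Fin 2) K V, b 0 = v ∧ b 1 = w := by
  have hinj : Function.Injective ![μ, ν] := by
    intro i j hij
    fin_cases i <;> fin_cases j <;> simp_all [eq_comm]
  have hli := g.eigenvectors_linearIndependent' _ hinj ![v, w] (by
    intro i
    fin_cases i <;> assumption)
  let b := basisOfLinearIndependentOfCardEqFinrank hli (by simp [hV])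
  have hb : ⇑b = ![v, w] := coe_basisOfLinearIndependentOfCardEqFinrank _ _
  exact ⟨b, by simp [hb], by simp [hb]⟩

end Module.End

/-- A nonzero endomorphism `φ` of a 2-dimensional complex vector space intertwined by an
invertible `g` with `g ∘ φ = t • (φ ∘ g)` for `t ≠ 0, ±1` puts `g` in diagonal form with
distinct nonzero eigenvalues `μ, tμ` and makes `φ` strictly lower triangular. -/
theorem stmt_7 (V : Type*) [AddCommGroup V] [Module ℂ V]
    (hdim : Module.finrank ℂ V = 2) (t : ℂ) (ht0 : t ≠ 0) (ht1 : t ≠ 1) (htm1 : t ≠ -1)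
    (φ : Module.End ℂ V) (hφ : φ ≠ 0) (g : Module.End ℂ V) (hg : IsUnit g)
    (h : g ∘ₗ φ = t • (φ ∘ₗ g)) :
    ∃ (b : Module.Basis (Fin 2) ℂ V) (μ : ℂ), μ ≠ 0 ∧ t * μ ≠ 0 ∧ μ ≠ t * μ ∧
      g (b 0) = μ • b 0 ∧ g (b 1) = (t * μ) • b 1 ∧ φ (b 1) = 0 ∧
      ∃ c : ℂ, c ≠ 0 ∧ φ (b 0) = c • b 1 := by
  have : FiniteDimensional ℂ V := .of_finrank_pos (by omega)
  obtain ⟨μ, hμ, htμ⟩ := exists_hasEigenvalue_and_hasEigenvalue_mul hφ h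
  have hμ0 : μ ≠ 0 := fun hμ0 => spectrum.zero_notMem ℂ hg (hμ0 ▸ hμ.mem_spectrum)
  have hne : μ ≠ t * μ := fun he => ht1 (mul_right_cancel₀ hμ0 (by rw [one_mul, ← he]))
  have hbot : g.eigenspace (t * (t * μ)) = ⊥ := by
    refine eigenspace_eq_bot_of_finrank_eq_two hdim hμ htμ hne (fun he => ?_) fun he => ?_
    · have : (t - 1) * (t + 1) * μ = 0 := by linear_combination he
      simp [sub_eq_zero, add_eq_zero_iff_eq_neg, ht1, htm1, hμ0] at this
    · exact hne (mul_left_cancel₀ ht0 he).symm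
  have hkill : ∀ x ∈ g.eigenspace (t * μ), φ x = 0 := fun x hx => by
    simpa [hbot] using mapsTo_genEigenspace_of_mul_eq_smul_mul h (t * μ) 1 hx
  obtain ⟨v, hv⟩ := hμ.exists_hasEigenvector
  obtain ⟨w, hw⟩ := htμ.exists_hasEigenvector
  have hφv : φ v ≠ 0 := fun hφv => by
    obtain ⟨b, hb0, hb1⟩ := exists_basis_of_hasEigenvector_of_ne hdim hv hw hne
    exact hφ (b.ext (Fin.forall_fin_two.mpr ⟨by simp [hb0, hφv], by simp [hb1, hkill w hw.1]⟩))
  have hφv' : g.HasEigenvector (t * μ) (φ v) :=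
    ⟨mapsTo_genEigenspace_of_mul_eq_smul_mul h μ 1 hv.1, hφv⟩
  obtain ⟨b, hb0, hb1⟩ := exists_basis_of_hasEigenvector_of_ne hdim hv hφv' hne
  refine ⟨b, μ, hμ0, mul_ne_zero ht0 hμ0, hne, ?_, ?_, ?_, 1, one_ne_zero, ?_⟩
  · rw [hb0, hv.apply_eq_smul]
  · rw [hb1, hφv'.apply_eq_smul]
  · rw [hb1, hkill _ hφv'.1]
  · rw [hb0, hb1, one_smul]
end
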